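/- In sl(7), the 24-dimensional subspace g spanned by {H^P_{k+1,7−k} : k=0,1,2} ∪ {H_i^⊥ : i=1,2,3} ∪ {E_{p,t} : p=1,2,3; t=2,…,7; p<t} ∪ {E_{4,6}, E_{4,7}, E_{5,7}} is a Lie subalgebra, and the span g_P of {E_{p,t} : p=1,2,3; t=4,5,6,7} is a 12-dimensional abelian ideal of g. -/

import Mathlib

/- STATEMENT 19: In sl(7), the 24-dimensional subspace g spanned by
{H^P_{k+1,7−k} : k=0,1,2} ∪ {H_i^⊥ : i=1,2,3} ∪ {E_{p,t} : p=1,2,3; t=2,…,7; p<t}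
∪ {E_{4,6}, E_{4,7}, E_{5,7}} is a Lie subalgebra, and
g_P = span{E_{p,t} : p=1,2,3; t=4,…,7} is a 12-dimensional abelian ideal of g.
Here H^P_{k+1,7−k} = (1/7)(7E_{k+1,k+1} − Σ_s E_{ss}) and H_i^⊥ is the traceless
peripheric Cartan element ((7−2i)/7)Σ_l E_{ll} − Σ_{m=i+1}^{7−i} E_{mm}.
(Indices translated to 0-based.) -/

open Matrix

attribute [local instance 100] LieRing.ofAssociativeRing

noncomputable section

variable (K : Type) [Field K] [CharZero K]

def E7 (i j : Fin 7) : Matrix (Fin 7) (Fin 7) K := single i j 1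

/-- `H^P_{k+1,7−k}` (with `k` 0-based row label). -/
def HP7 (k : Fin 7) : Matrix (Fin 7) (Fin 7) K :=
  (7 : K)⁻¹ • ((7 : K) • E7 K k k - ∑ s : Fin 7, E7 K s s)

/-- `H_i^⊥ = ((7−2i)/7) Σ_l E_{ll} − Σ_{m=i+1}^{7−i} E_{mm}` (1-based label `i`). -/
def Hperp7 (i : ℕ) : Matrix (Fin 7) (Fin 7) K :=
  (((7 : K) - 2 * i) / 7) • (1 : Matrix (Fin 7) (Fin 7) K) -
    ∑ m : Fin 7, if i ≤ (m : ℕ) ∧ (m : ℕ) ≤ 6 - i then E7 K m m else 0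

/-- The spanning set of g. -/
def gSet7 : Set (Matrix (Fin 7) (Fin 7) K) :=
  {x | (∃ k : Fin 7, (k : ℕ) ≤ 2 ∧ x = HP7 K k) ∨
       (∃ i : ℕ, 1 ≤ i ∧ i ≤ 3 ∧ x = Hperp7 K i) ∨
       (∃ p t : Fin 7, (p : ℕ) ≤ 2 ∧ p < t ∧ x = E7 K p t) ∨
       x = E7 K 3 5 ∨ x = E7 K 3 6 ∨ x = E7 K 4 6}

/-- The translation part g_P. -/
def gP7 : Submodule K (Matrix (Fin 7) (Fin 7) K) :=
  Submodule.span K {x | ∃ p t : Fin 7, (p : ℕ) ≤ 2 ∧ 3 ≤ (t : ℕ) ∧ x = E7 K p t}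

/-
g is the space of traceless matrices supported on the pattern `gSupport`: the diagonal and the
strict upper triangle without the superdiagonal positions (3,4), (4,5), (5,6) (0-based). The
pattern is transitive, so these matrices are closed under products, hence under brackets; its 25
positions less the trace condition leave dimension 24. g_P is the space of matrices supported on
the block rows 0–2 × columns 3–6. Multiplying a block matrix by a g-pattern matrix on either side
stays in the block, and the product of two block matrices vanishes because the columns of the
block are disjoint from its rows.
-/

namespace Matrix

variable {m n o R : Type*}

section Semiring

variable [Semiring R]

def supportedOn (r : m → n → Prop) : Submodule R (Matrix m n R) where
  carrier := {x | ∀ i j, ¬ r i j → x i j = 0}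
  add_mem' hx hy i j h := by simp [hx i j h, hy i j h]
  zero_mem' _ _ _ := rfl
  smul_mem' c x hx i j h := by simp [hx i j h]

variable {r : m → n → Prop} {x : Matrix m n R}

theorem supportedOn_mono {s : m → n → Prop} (h : ∀ i j, r i j → s i j) :
    supportedOn (R := R) r ≤ supportedOn s :=
  fun _ hx i j hs => hx i j fun hr => hs (h i j hr)

theorem single_mem_supportedOn [DecidableEq m] [DecidableEq n] {i : m} {j : n} (h : r i j)
    (c : R) : single i j c ∈ supportedOn r := by
  intro a b hab
  apply single_apply_of_ne
  rintro ⟨rfl, rfl⟩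
  exact hab h

theorem diagonal_mem_supportedOn [DecidableEq n] {r : n → n → Prop} (hr : ∀ i, r i i)
    (d : n → R) : diagonal d ∈ supportedOn r := by
  intro i j h
  exact diagonal_apply_ne d fun hij => h (hij ▸ hr i)

theorem mul_mem_supportedOn [Fintype n] {s : n → o → Prop} {t : m → o → Prop}
    (hrs : ∀ i b j, r i b → s b j → t i j) {y : Matrix n o R} (hx : x ∈ supportedOn r)
    (hy : y ∈ supportedOn s) : x * y ∈ supportedOn t := by
  intro i j hij
  rw [mul_apply]
  refine Finset.sum_eq_zero fun b _ => ?_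
  by_cases hib : r i b
  · rw [hy b j fun hbj => hij (hrs i b j hib hbj), mul_zero]
  · rw [hx i b hib, zero_mul]

theorem mul_eq_zero_of_mem_supportedOn [Fintype n] {s : n → o → Prop}
    (hrs : ∀ i b j, r i b → ¬ s b j) {y : Matrix n o R} (hx : x ∈ supportedOn r)
    (hy : y ∈ supportedOn s) : x * y = 0 :=
  ext fun i j => mul_mem_supportedOn (t := fun _ _ => False) hrs
    hx hy i j not_false

theorem trace_eq_zero_of_mem_supportedOn [Fintype n] {r : n → n → Prop} (hr : ∀ i, ¬ r i i)
    {x : Matrix n n R} (hx : x ∈ supportedOn r) : trace x = 0 :=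
  Finset.sum_eq_zero fun i _ => hx i i (hr i)

theorem span_single_eq_supportedOn [Fintype m] [Fintype n] [DecidableEq m] [DecidableEq n] :
    Submodule.span R {x | ∃ i j, r i j ∧ single i j 1 = x} = supportedOn (R := R) r := by
  refine le_antisymm (Submodule.span_le.2 ?_) fun x hx => ?_
  · rintro _ ⟨i, j, h, rfl⟩
    exact single_mem_supportedOn h 1
  rw [matrix_eq_sum_single x]
  refine Submodule.sum_mem _ fun i _ => Submodule.sum_mem _ fun j _ => ?_
  by_cases h : r i j
  · rw [show single i j (x i j) = x i j • single i j 1 by rw [smul_single, smul_eq_mul, mul_one]]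
    exact Submodule.smul_mem _ _ (Submodule.subset_span ⟨i, j, h, rfl⟩)
  · rw [hx i j h, single_zero]
    exact zero_mem _

end Semiring

section Ring

variable [Ring R] [DecidableEq n]

theorem sub_diagonal_diag_mem_supportedOn {r : n → n → Prop} {x : Matrix n n R}
    (hx : x ∈ supportedOn r) : x - diagonal (diag x) ∈ supportedOn fun i j => r i j ∧ i ≠ j := by
  intro i j hij
  by_cases h : i = j
  · subst h; simp
  · rw [sub_apply, diagonal_apply_ne _ h, sub_zero]
    exact hx i j fun hr => hij ⟨hr, h⟩

theorem sum_smul_single_sub_smul_one [Fintype n] (c : R) {d : n → R} (hd : ∑ k, d k = 0) :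
    ∑ k, d k • (single k k 1 - c • 1) = diagonal d := by
  simp only [smul_sub, Finset.sum_sub_distrib, smul_smul, ← Finset.sum_smul, ← Finset.sum_mul, hd,
    zero_mul, zero_smul, sub_zero, smul_single, smul_eq_mul, mul_one, sum_single_eq_diagonal]

variable [Fintype n]

theorem lie_mem_supportedOn {r s : n → n → Prop} (hrs : ∀ i b j, r i b → s b j → s i j)
    (hsr : ∀ i b j, s i b → r b j → s i j) {x y : Matrix n n R} (hx : x ∈ supportedOn r)
    (hy : y ∈ supportedOn s) : ⁅x, y⁆ ∈ supportedOn s := by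
  rw [Ring.lie_def]
  exact sub_mem (mul_mem_supportedOn hrs hx hy) (mul_mem_supportedOn hsr hy hx)

theorem lie_eq_zero_of_mem_supportedOn {r : n → n → Prop} (hr : ∀ i b j, r i b → ¬ r b j)
    {x y : Matrix n n R} (hx : x ∈ supportedOn r) (hy : y ∈ supportedOn r) : ⁅x, y⁆ = 0 := by
  rw [Ring.lie_def, mul_eq_zero_of_mem_supportedOn hr hx hy,
    mul_eq_zero_of_mem_supportedOn hr hy hx, sub_zero]

end Ring

def supportedOnLieSubalgebra [CommRing R] [Fintype n] [DecidableEq n] (r : n → n → Prop)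
    [IsTrans n r] : LieSubalgebra R (Matrix n n R) :=
  { supportedOn r with
    lie_mem' := lie_mem_supportedOn (fun _ _ _ => _root_.trans) (fun _ _ _ => _root_.trans) }

section Field

variable [Field R] [Fintype m] [Fintype n] [DecidableEq m] [DecidableEq n]

theorem finrank_supportedOn (r : m → n → Prop) [DecidableRel r] :
    Module.finrank R (supportedOn (R := R) r) = Fintype.card {p : m × n // r p.1 p.2} := by
  let f : {p : m × n // r p.1 p.2} → Matrix m n R := fun p => single p.1.1 p.1.2 1
  have hf : LinearIndependent R f := by
    convert (stdBasis R m n).linearIndependent.comp _ Subtype.val_injective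
    ext ⟨⟨i, j⟩, _⟩ : 1
    exact (stdBasis_eq_single R i j).symm
  have hrange : Set.range f = {x | ∃ i j, r i j ∧ single i j 1 = x} := by
    ext x
    simp [f]
  rw [← span_single_eq_supportedOn, ← hrange, finrank_span_eq_card hf]

theorem finrank_supportedOn_inf_ker_trace {r : n → n → Prop} [DecidableRel r] {i : n}
    (hi : r i i) :
    Module.finrank R ↥(supportedOn r ⊓ LinearMap.ker (traceLinearMap n R R)) + 1 =
      Fintype.card {p : n × n // r p.1 p.2} := by
  set A : Submodule R (Matrix n n R) := supportedOn r
  let f := (traceLinearMap n R R).domRestrict A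
  have hrange : LinearMap.range f = ⊤ := by
    refine eq_top_iff.2 fun c _ => ⟨⟨single i i c, single_mem_supportedOn hi c⟩, ?_⟩
    simp [f]
  have hker : LinearMap.ker f = (A ⊓ LinearMap.ker (traceLinearMap n R R)).comap A.subtype := by
    rw [LinearMap.ker_domRestrict, Submodule.comap_inf, Submodule.comap_subtype_self, top_inf_eq]
  have hrank := f.finrank_range_add_finrank_ker
  rw [hrange, hker, finrank_top, Module.finrank_self,
    (Submodule.comapSubtypeEquivOfLe inf_le_left).finrank_eq, finrank_supportedOn] at hrank
  omega

end Field

end Matrix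

def gSupport (i j : Fin 7) : Prop :=
  (i : ℕ) = j ∨ ((i : ℕ) < j ∧ ((i : ℕ) ≤ 2 ∨ (i : ℕ) + 1 < j))

instance : DecidableRel gSupport := fun _ _ => by unfold gSupport; infer_instance

instance : IsTrans (Fin 7) gSupport := ⟨fun _ _ _ => by unfold gSupport; omega⟩

def gPSupport (i j : Fin 7) : Prop := (i : ℕ) ≤ 2 ∧ 3 ≤ (j : ℕ)

instance : DecidableRel gPSupport := fun _ _ => by unfold gPSupport; infer_instance

theorem HP7_eq (k : Fin 7) : HP7 K k = single k k 1 - (7 : K)⁻¹ • 1 := by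
  rw [HP7, E7, show ∑ s, E7 K s s = 1 from sum_single_one, smul_sub, smul_smul,
    inv_mul_cancel₀ (by norm_num : (7 : K) ≠ 0), one_smul]

omit [CharZero K] in
theorem Hperp7_eq_diagonal (i : ℕ) :
    Hperp7 K i = diagonal fun s : Fin 7 =>
      ((7 : K) - 2 * i) / 7 - if i ≤ (s : ℕ) ∧ (s : ℕ) ≤ 6 - i then 1 else 0 := by
  have hE : ∀ m : Fin 7, (if i ≤ (m : ℕ) ∧ (m : ℕ) ≤ 6 - i then E7 K m m else 0) =
      single m m (if i ≤ (m : ℕ) ∧ (m : ℕ) ≤ 6 - i then 1 else 0) := by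
    intro m; split_ifs <;> simp [E7]
  simp only [Hperp7, hE, sum_single_eq_diagonal, smul_one_eq_diagonal, ← diagonal_sub]

theorem HP7_eq_diagonal (k : Fin 7) :
    HP7 K k = diagonal fun s : Fin 7 => (if s = k then 1 else 0) - (7 : K)⁻¹ := by
  rw [HP7_eq, ← diagonal_single, smul_one_eq_diagonal, diagonal_sub]
  congr 1
  ext s
  simp [Pi.single_apply]

theorem HP7_mem_span_gSet7 (k : Fin 7) : HP7 K k ∈ Submodule.span K (gSet7 K) := by
  have hHP : ∀ k : Fin 7, (k : ℕ) ≤ 2 → HP7 K k ∈ Submodule.span K (gSet7 K) :=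
    fun k hk => Submodule.subset_span (Or.inl ⟨k, hk, rfl⟩)
  have hperp : ∀ i : ℕ, 1 ≤ i → i ≤ 3 → Hperp7 K i ∈ Submodule.span K (gSet7 K) :=
    fun i h1 h3 => Submodule.subset_span (Or.inr (Or.inl ⟨i, h1, h3, rfl⟩))
  -- `Hperp7 i = -∑_{i ≤ m ≤ 6 - i} HP7 m` and `∑_m HP7 m = 0`.
  have h3 : HP7 K 3 = -Hperp7 K 3 := by
    rw [HP7_eq_diagonal, Hperp7_eq_diagonal, diagonal_neg]
    congr 1; ext s; fin_cases s <;> norm_num [Fin.ext_iff]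
  have h4 : HP7 K 4 = Hperp7 K 3 - Hperp7 K 2 - HP7 K 2 := by
    simp only [HP7_eq_diagonal, Hperp7_eq_diagonal, diagonal_sub]
    congr 1; ext s; fin_cases s <;> norm_num [Fin.ext_iff]
  have h5 : HP7 K 5 = Hperp7 K 2 - Hperp7 K 1 - HP7 K 1 := by
    simp only [HP7_eq_diagonal, Hperp7_eq_diagonal, diagonal_sub]
    congr 1; ext s; fin_cases s <;> norm_num [Fin.ext_iff]
  have h6 : HP7 K 6 = Hperp7 K 1 - HP7 K 0 := by
    simp only [HP7_eq_diagonal, Hperp7_eq_diagonal, diagonal_sub]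
    congr 1; ext s; fin_cases s <;> norm_num [Fin.ext_iff]
  have m3 : HP7 K 3 ∈ Submodule.span K (gSet7 K) := h3 ▸ neg_mem (hperp 3 (by norm_num) le_rfl)
  have m4 : HP7 K 4 ∈ Submodule.span K (gSet7 K) := h4 ▸
    sub_mem (sub_mem (hperp 3 (by norm_num) le_rfl) (hperp 2 (by norm_num) (by norm_num)))
      (hHP 2 (by norm_num))
  have m5 : HP7 K 5 ∈ Submodule.span K (gSet7 K) := h5 ▸
    sub_mem (sub_mem (hperp 2 (by norm_num) (by norm_num)) (hperp 1 le_rfl (by norm_num)))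
      (hHP 1 (by norm_num))
  have m6 : HP7 K 6 ∈ Submodule.span K (gSet7 K) := h6 ▸
    sub_mem (hperp 1 le_rfl (by norm_num)) (hHP 0 (by norm_num))
  fin_cases k
  exacts [hHP 0 (by norm_num), hHP 1 (by norm_num), hHP 2 (by norm_num), m3, m4, m5, m6]

omit [CharZero K] in
theorem single_mem_span_gSet7 {i j : Fin 7} (h : gSupport i j) (hij : i ≠ j) :
    single i j 1 ∈ Submodule.span K (gSet7 K) := by
  have hcases : ((i : ℕ) ≤ 2 ∧ i < j) ∨ (i = 3 ∧ j = 5) ∨ (i = 3 ∧ j = 6) ∨ (i = 4 ∧ j = 6) := by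
    revert i j; decide
  refine Submodule.subset_span (Or.inr (Or.inr ?_))
  rcases hcases with ⟨hi, hij⟩ | ⟨rfl, rfl⟩ | ⟨rfl, rfl⟩ | ⟨rfl, rfl⟩
  · exact Or.inl ⟨i, j, hi, hij, rfl⟩
  · exact Or.inr (Or.inl rfl)
  · exact Or.inr (Or.inr (Or.inl rfl))
  · exact Or.inr (Or.inr (Or.inr rfl))

theorem gSet7_subset_supportedOn_inf_ker_trace : gSet7 K ⊆
    ((supportedOn gSupport ⊓ LinearMap.ker (traceLinearMap (Fin 7) K K) : Submodule K _) :
      Set (Matrix (Fin 7) (Fin 7) K)) := by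
  have hdiag : ∀ d : Fin 7 → K, diagonal d ∈ supportedOn gSupport :=
    diagonal_mem_supportedOn fun _ => Or.inl rfl
  have hsingle : ∀ i j : Fin 7, gSupport i j → i ≠ j →
      E7 K i j ∈ supportedOn gSupport ⊓ LinearMap.ker (traceLinearMap (Fin 7) K K) :=
    fun i j h hij => ⟨single_mem_supportedOn h 1, trace_single_eq_of_ne i j 1 hij⟩
  rintro x (⟨k, -, rfl⟩ | ⟨i, hi1, hi3, rfl⟩ | ⟨p, t, hp, hpt, rfl⟩ | rfl | rfl | rfl)
  · rw [HP7_eq_diagonal]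
    refine ⟨hdiag _, ?_⟩
    simp [Finset.sum_sub_distrib]
  · rw [Hperp7_eq_diagonal]
    refine ⟨hdiag _, ?_⟩
    rw [SetLike.mem_coe, LinearMap.mem_ker, traceLinearMap_apply, trace_diagonal,
      Fin.sum_univ_seven]
    interval_cases i <;> norm_num
  · exact hsingle p t (Or.inr ⟨hpt, Or.inl hp⟩) hpt.ne
  · exact hsingle 3 5 (by decide) (by decide)
  · exact hsingle 3 6 (by decide) (by decide)
  · exact hsingle 4 6 (by decide) (by decide)

theorem span_gSet7_eq :
    Submodule.span K (gSet7 K) =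
      supportedOn gSupport ⊓ LinearMap.ker (traceLinearMap (Fin 7) K K) := by
  refine le_antisymm (Submodule.span_le.2 (gSet7_subset_supportedOn_inf_ker_trace K)) ?_
  rintro x ⟨hx, htr⟩
  rw [← sub_add_cancel x (diagonal (diag x))]
  refine add_mem ?_ ?_
  · have hoff := sub_diagonal_diag_mem_supportedOn hx
    rw [← span_single_eq_supportedOn] at hoff
    refine Submodule.span_le.2 ?_ hoff
    rintro _ ⟨i, j, ⟨h, hij⟩, rfl⟩
    exact single_mem_span_gSet7 K h hij
  · have htr : ∑ k, diag x k = 0 := htr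
    rw [← sum_smul_single_sub_smul_one (7 : K)⁻¹ htr]
    simp only [← HP7_eq]
    exact Submodule.sum_mem _ fun k _ => Submodule.smul_mem _ _ (HP7_mem_span_gSet7 K k)

omit [CharZero K] in
theorem gP7_eq_supportedOn : gP7 K = supportedOn gPSupport := by
  rw [gP7, ← span_single_eq_supportedOn]
  congr 1
  exact Set.ext fun x => ⟨fun ⟨p, t, hp, ht, hx⟩ => ⟨p, t, ⟨hp, ht⟩, hx.symm⟩,
    fun ⟨i, j, ⟨hi, hj⟩, hx⟩ => ⟨i, j, hi, hj, hx.symm⟩⟩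

theorem stmt19 :
    (∃ S : LieSubalgebra K (Matrix (Fin 7) (Fin 7) K),
      (S : Submodule K (Matrix (Fin 7) (Fin 7) K)) = Submodule.span K (gSet7 K)) ∧
    Module.finrank K (Submodule.span K (gSet7 K)) = 24 ∧
    Module.finrank K (gP7 K) = 12 ∧
    gP7 K ≤ Submodule.span K (gSet7 K) ∧
    (∀ x ∈ Submodule.span K (gSet7 K), ∀ y ∈ gP7 K, ⁅x, y⁆ ∈ gP7 K) ∧
    (∀ x ∈ gP7 K, ∀ y ∈ gP7 K, ⁅x, y⁆ = 0) := by
  rw [span_gSet7_eq, gP7_eq_supportedOn]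
  refine ⟨⟨supportedOnLieSubalgebra gSupport ⊓ LieAlgebra.SpecialLinear.sl (Fin 7) K, rfl⟩,
    ?_, ?_, ?_, ?_, ?_⟩
  · have hrank := finrank_supportedOn_inf_ker_trace (R := K) (r := gSupport) (i := 0) (Or.inl rfl)
    have hcard : Fintype.card {p : Fin 7 × Fin 7 // gSupport p.1 p.2} = 25 := by decide
    omega
  · rw [finrank_supportedOn]; decide
  · refine le_inf (supportedOn_mono fun i j h => ?_) fun x hx => ?_
    · unfold gSupport gPSupport at *; omega
    · exact trace_eq_zero_of_mem_supportedOn (fun i h => by unfold gPSupport at h; omega) hx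
  · rintro x ⟨hx, -⟩ y hy
    exact lie_mem_supportedOn (fun i b j => by unfold gSupport gPSupport; omega)
      (fun i b j => by unfold gSupport gPSupport; omega) hx hy
  · intro x hx y hy
    exact lie_eq_zero_of_mem_supportedOn (fun i b j => by unfold gPSupport; omega) hx hy

end
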